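/- Let V be a real vector space, m ≥ 1, and T : V^m → ℝ a symmetric m-multilinear map. If T(u₁,…,u_m) ≠ 0 for some vectors u₁,…,u_m, then there exist natural numbers t₁,…,t_m ∈ {0,1,…,m} such that the single vector u = t₁u₁ + ⋯ + t_mu_m satisfies T(u,…,u) ≠ 0. -/

import Mathlib

/-- Polarization: if a symmetric `m`-multilinear map `T : V^m → ℝ` is nonzero on some
tuple `(u₁,…,u_m)`, then there are coefficients `tᵢ ∈ {0,…,m}` such that the single
vector `u = Σ tᵢ uᵢ` satisfies `T(u,…,u) ≠ 0`. -/
theorem stmt2 {V : Type*} [AddCommGroup V] [Module ℝ V] {m : ℕ} (hm : 1 ≤ m)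
    (T : MultilinearMap ℝ (fun _ : Fin m => V) ℝ)
    (hsymm : ∀ (σ : Equiv.Perm (Fin m)) (v : Fin m → V), T (v ∘ σ) = T v)
    (u : Fin m → V) (hu : T u ≠ 0) :
    ∃ t : Fin m → ℕ, (∀ i, t i ≤ m) ∧
      T (fun _ => ∑ i, (t i : ℝ) • u i) ≠ 0 := by
  classical
  by_contra hcon
  push_neg at hcon
  apply hu
  -- T vanishes on all subset sums
  have key : ∀ S : Finset (Fin m), T (fun _ => ∑ i ∈ S, u i) = 0 := by
    intro S
    have h1 := hcon (fun i => if i ∈ S then 1 else 0) (fun i => by show (if i ∈ S then 1 else 0 : ℕ) ≤ m; split <;> omega)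
    have h2 : (∑ i, (((if i ∈ S then 1 else 0 : ℕ) : ℝ)) • u i) = ∑ i ∈ S, u i := by
      simp [apply_ite (fun n : ℕ => (n : ℝ)), ite_smul, Finset.sum_ite_mem]
    rwa [h2] at h1
  -- expand multilinearly
  have expand : ∀ S : Finset (Fin m),
      T (fun _ => ∑ i ∈ S, u i)
        = ∑ r ∈ Fintype.piFinset (fun _ : Fin m => S), T (fun i => u (r i)) := by
    intro S
    exact T.map_sum_finset (fun _ j => u j) (fun _ => S)
  -- the coefficient computation
  have coeff : ∀ r : Fin m → Fin m,
      (∑ S : Finset (Fin m), if (∀ i, r i ∈ S) then ((-1 : ℝ) ^ (m - S.card)) else 0)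
        = if Function.Surjective r then 1 else 0 := by
    intro r
    set A : Finset (Fin m) := Finset.image r Finset.univ with hA
    have hcond : ∀ S : Finset (Fin m), (∀ i, r i ∈ S) ↔ A ⊆ S := by
      intro S
      constructor
      · intro h x hx
        rcases Finset.mem_image.mp hx with ⟨i, -, rfl⟩
        exact h i
      · intro h i
        exact h (Finset.mem_image.mpr ⟨i, Finset.mem_univ i, rfl⟩)
    have step1 : (∑ S : Finset (Fin m), if (∀ i, r i ∈ S) then ((-1 : ℝ) ^ (m - S.card)) else 0)
        = ∑ B : Finset (Fin m), if B ⊆ Aᶜ then ((-1 : ℝ) ^ B.card) else 0 := by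
      rw [← Fintype.sum_bijective _ compl_involutive.bijective _ _ (fun B => ?_)]
      have h1 : (∀ i, r i ∈ Bᶜ) ↔ B ⊆ Aᶜ := by
        rw [hcond, Finset.subset_compl_comm]
      have h2 : m - (Bᶜ).card = B.card := by
        have := Finset.card_le_univ B
        rw [Finset.card_compl, Fintype.card_fin] at *
        omega
      rw [h2]
      simp only [h1]
    have step2 : (∑ B : Finset (Fin m), if B ⊆ Aᶜ then ((-1 : ℝ) ^ B.card) else 0)
        = ∑ B ∈ (Aᶜ).powerset, ((-1 : ℝ) ^ B.card) := by
      rw [← Finset.sum_filter]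
      apply Finset.sum_congr _ (fun _ _ => rfl)
      ext B
      simp [Finset.mem_powerset]
    have step3 : (∑ B ∈ (Aᶜ).powerset, ((-1 : ℝ) ^ B.card))
        = if Aᶜ = (∅ : Finset (Fin m)) then 1 else 0 := by
      have := Finset.sum_powerset_neg_one_pow_card (x := Aᶜ)
      have hcast : (∑ B ∈ (Aᶜ).powerset, ((-1 : ℝ) ^ B.card))
          = ((∑ B ∈ (Aᶜ).powerset, ((-1 : ℤ) ^ B.card) : ℤ) : ℝ) := by
        push_cast
        rfl
      rw [hcast, this]
      split <;> simp
    have hsurj : Aᶜ = (∅ : Finset (Fin m)) ↔ Function.Surjective r := by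
      rw [Finset.compl_eq_empty_iff, Finset.eq_univ_iff_forall]
      simp [hA, Function.Surjective, eq_comm]
    rw [step1, step2, step3]
    simp [hsurj]
  -- the main identity
  have main : (0 : ℝ) = (m.factorial : ℝ) * T u := by
    have lhs0 : (∑ S : Finset (Fin m), ((-1 : ℝ) ^ (m - S.card)) * T (fun _ => ∑ i ∈ S, u i))
        = 0 := by
      simp [key]
    rw [← lhs0]
    calc (∑ S : Finset (Fin m), ((-1 : ℝ) ^ (m - S.card)) * T (fun _ => ∑ i ∈ S, u i))
        = ∑ S : Finset (Fin m), ∑ r : Fin m → Fin m,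
            (if (∀ i, r i ∈ S) then ((-1 : ℝ) ^ (m - S.card)) * T (fun i => u (r i)) else 0) := by
          refine Finset.sum_congr rfl fun S _ => ?_
          rw [expand, Finset.mul_sum, ← Finset.sum_filter]
          refine Finset.sum_congr ?_ fun _ _ => rfl
          ext r
          simp [Fintype.mem_piFinset]
      _ = ∑ r : Fin m → Fin m,
            (∑ S : Finset (Fin m), if (∀ i, r i ∈ S) then ((-1 : ℝ) ^ (m - S.card)) else 0)
              * T (fun i => u (r i)) := by
          rw [Finset.sum_comm]
          refine Finset.sum_congr rfl fun r _ => ?_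
          rw [Finset.sum_mul]
          refine Finset.sum_congr rfl fun S _ => ?_
          rw [ite_mul, zero_mul]
      _ = ∑ r : Fin m → Fin m,
            (if Function.Surjective r then T (fun i => u (r i)) else 0) := by
          refine Finset.sum_congr rfl fun r _ => ?_
          rw [coeff r]
          split <;> simp
      _ = ∑ r : Fin m → Fin m, (if Function.Surjective r then T u else 0) := by
          refine Finset.sum_congr rfl fun r _ => ?_
          split
          · rename_i hs
            have hb : Function.Bijective r := Finite.surjective_iff_bijective.mp hs
            have := hsymm (Equiv.ofBijective r hb) u
            exact this
          · rfl
      _ = (m.factorial : ℝ) * T u := by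
          rw [Finset.sum_ite, Finset.sum_const_zero, add_zero, Finset.sum_const]
          have e : Equiv.Perm (Fin m) ≃ {r : Fin m → Fin m // Function.Surjective r} :=
            { toFun := fun σ => ⟨σ, σ.surjective⟩
              invFun := fun r => Equiv.ofBijective r (Finite.surjective_iff_bijective.mp r.2)
              left_inv := fun σ => Equiv.ext fun x => rfl
              right_inv := fun r => rfl }
          have hcard : (Finset.univ.filter (fun r : Fin m → Fin m => Function.Surjective r)).card
              = m.factorial := by
            rw [← Fintype.card_subtype, ← Fintype.card_congr e, Fintype.card_perm,
              Fintype.card_fin]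
          rw [hcard, nsmul_eq_mul]
  have hne : (m.factorial : ℝ) ≠ 0 := Nat.cast_ne_zero.mpr m.factorial_ne_zero
  exact (mul_eq_zero.mp main.symm).resolve_left hne
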